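/- arXiv:2109.08856 — 2 statements merged into one kernel-verified Lean document; each statement's English description precedes it below -/
import Mathlib

section
/- For every assignment problem and preference profile, every popular deterministic assignment satisfies favoring-eagerness-for-remaining-items (FERI). -/
open Finset

noncomputable section

namespace FeriPaper

/-- A preference profile: `R j o o'` means agent `j` strictly prefers item `o` to `o'`. -/
abbrev Pref (n : ℕ) := Fin n → Fin n → Fin n → Prop

/-- Every agent's preference is a strict linear (total) order on the items. -/
def IsProfile {n : ℕ} (R : Pref n) : Prop :=
  ∀ j : Fin n, IsStrictTotalOrder (Fin n) (R j)

/-- Profiles as a type (for mechanisms). -/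
def Profile (n : ℕ) := { R : Pref n // IsProfile R }

/-- `o` is agent `j`'s most preferred item in the set `S`. -/
def IsTopIn {n : ℕ} (R : Pref n) (j : Fin n) (S : Set (Fin n)) (o : Fin n) : Prop :=
  o ∈ S ∧ ∀ o' ∈ S, o' ≠ o → R j o o'

/-- `Tunion R A r` is the union `T_1(A) ∪ ⋯ ∪ T_r(A)` (so `Tunion R A 0 = ∅`). -/
def Tunion {n : ℕ} (R : Pref n) (A : Equiv.Perm (Fin n)) : ℕ → Set (Fin n)
  | 0 => ∅
  | r + 1 =>
      Tunion R A r ∪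
        {o | ∃ j : Fin n, A j ∉ Tunion R A r ∧ IsTopIn R j (Tunion R A r)ᶜ o}

/-- `Tset R A r` is the set `T_{r+1}(A)` (0-based round index). -/
def Tset {n : ℕ} (R : Pref n) (A : Equiv.Perm (Fin n)) (r : ℕ) : Set (Fin n) :=
  {o | ∃ j : Fin n, A j ∉ Tunion R A r ∧ IsTopIn R j (Tunion R A r)ᶜ o}

/-- Favoring-eagerness-for-remaining-items (FERI). -/
def FERI {n : ℕ} (R : Pref n) (A : Equiv.Perm (Fin n)) : Prop :=
  ∀ r : ℕ, ∀ o ∈ Tset R A r, IsTopIn R (A.symm o) (Tunion R A r)ᶜ o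

/-- Pareto efficiency (PE) of a deterministic assignment. -/
def ParetoEff {n : ℕ} (R : Pref n) (A : Equiv.Perm (Fin n)) : Prop :=
  ¬ ∃ (A' : Equiv.Perm (Fin n)) (N' : Set (Fin n)), N'.Nonempty ∧
      (∀ j ∈ N', R j (A' j) (A j)) ∧ ∀ k, k ∉ N' → A' k = A k

/-- Number of agents receiving their overall first choice. -/
def firstChoiceCount {n : ℕ} (R : Pref n) (A : Equiv.Perm (Fin n)) : ℕ :=
  {j : Fin n | IsTopIn R j Set.univ (A j)}.ncard

/-- First-choice maximality (FCM). -/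
def FCM {n : ℕ} (R : Pref n) (A : Equiv.Perm (Fin n)) : Prop :=
  ¬ ∃ A' : Equiv.Perm (Fin n), firstChoiceCount R A < firstChoiceCount R A'

/-- Rank of item `o` in agent `j`'s preference (1 = most preferred). -/
def rank {n : ℕ} (R : Pref n) (j o : Fin n) : ℕ :=
  {o' : Fin n | R j o' o ∨ o' = o}.ncard

/-- Favoring-higher-ranks (FHR). -/
def FHR {n : ℕ} (R : Pref n) (A : Equiv.Perm (Fin n)) : Prop :=
  ∀ j k : Fin n, rank R j (A j) ≤ rank R k (A j) ∨ rank R k (A k) < rank R k (A j)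

/-- Popularity (POP). -/
def POP {n : ℕ} (R : Pref n) (A : Equiv.Perm (Fin n)) : Prop :=
  ¬ ∃ A' : Equiv.Perm (Fin n),
      {j : Fin n | R j (A j) (A' j)}.ncard < {j : Fin n | R j (A' j) (A j)}.ncard

/-- Signature of a deterministic assignment: `signature R A r` is the number of agents
    assigned their `r`-th ranked item. -/
def signature {n : ℕ} (R : Pref n) (A : Equiv.Perm (Fin n)) (r : ℕ) : ℕ :=
  {j : Fin n | rank R j (A j) = r}.ncard

/-- `x` dominates `y` as signatures. -/
def SigDom (x y : ℕ → ℕ) : Prop :=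
  ∃ r : ℕ, y r < x r ∧ ∀ r' < r, y r' ≤ x r'

/-- Rank maximality (RM). -/
def RM {n : ℕ} (R : Pref n) (A : Equiv.Perm (Fin n)) : Prop :=
  ¬ ∃ A' : Equiv.Perm (Fin n), SigDom (signature R A') (signature R A)

/-- A random assignment: a doubly stochastic matrix. -/
def DoublyStochastic {n : ℕ} (P : Fin n → Fin n → ℝ) : Prop :=
  (∀ j o, 0 ≤ P j o) ∧ (∀ j, ∑ o, P j o = 1) ∧ (∀ o, ∑ j, P j o = 1)

/-- The 0-1 permutation matrix of a deterministic assignment. -/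
def permMatrix {n : ℕ} (A : Equiv.Perm (Fin n)) : Fin n → Fin n → ℝ :=
  fun j o => if A j = o then 1 else 0

/-- Upper contour set of item `o` under the strict preference `pr`. -/
def ucs {n : ℕ} (pr : Fin n → Fin n → Prop) (o : Fin n) : Set (Fin n) :=
  {x | pr x o ∨ x = o}

/-- Total probability mass on the upper contour set of `o`. -/
def upperSum {n : ℕ} (pr : Fin n → Fin n → Prop) (p : Fin n → ℝ) (o : Fin n) : ℝ :=
  ∑ x, (ucs pr o).indicator p x

/-- `p` (weakly) stochastically dominates `q` w.r.t. the strict preference `pr`. -/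
def SD {n : ℕ} (pr : Fin n → Fin n → Prop) (p q : Fin n → ℝ) : Prop :=
  ∀ o, upperSum pr q o ≤ upperSum pr p o

/-- sd-envy-freeness. -/
def sdEF {n : ℕ} (R : Pref n) (P : Fin n → Fin n → ℝ) : Prop :=
  ∀ j k : Fin n, SD (R j) (P j) (P k)

/-- sd-weak-envy-freeness. -/
def sdWEF {n : ℕ} (R : Pref n) (P : Fin n → Fin n → ℝ) : Prop :=
  ∀ j k : Fin n, SD (R j) (P k) (P j) → P j = P k

/-- The common prefix of the preferences of agents `j` and `k`: items all of whose
    (weak) upper contour sets w.r.t. `j` coincide for `j` and `k`. -/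
def commonPrefix {n : ℕ} (R : Pref n) (j k : Fin n) : Set (Fin n) :=
  {o | ∀ x ∈ ucs (R j) o, ucs (R j) x = ucs (R k) x}

/-- Strong equal treatment of equals (SETE). -/
def SETE {n : ℕ} (R : Pref n) (P : Fin n → Fin n → ℝ) : Prop :=
  ∀ j k : Fin n, ∀ o ∈ commonPrefix R j k, P j o = P k o

/-- A random assignment satisfies a property `X` ex post if it is a convex combination
    of (permutation matrices of) deterministic assignments each satisfying `X`. -/
def ExPost {n : ℕ} (X : Equiv.Perm (Fin n) → Prop) (P : Fin n → Fin n → ℝ) : Prop :=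
  ∃ w : Equiv.Perm (Fin n) → ℝ, (∀ A, 0 ≤ w A) ∧ (∑ A, w A) = 1 ∧
    (∀ A, w A ≠ 0 → X A) ∧ ∀ j o, P j o = ∑ A, w A * permMatrix A j o

/-- Ex-ante favoring-higher-ranks (ea-FHR). -/
def EaFHR {n : ℕ} (R : Pref n) (P : Fin n → Fin n → ℝ) : Prop :=
  ∀ j o, 0 < P j o → ∀ k, rank R k o < rank R j o → upperSum (R k) (P k) o = 1

/-- The eating structure for ea-FERI: `(eaState R P r).1 = M_{P,r+1}` and
    `(eaState R P r).2 o = ⋃_{r' ≤ r+1} E_{P,r'}(o)` (1-based indexing on the right). -/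
def eaState {n : ℕ} (R : Pref n) (P : Fin n → Fin n → ℝ) :
    ℕ → Set (Fin n) × (Fin n → Set (Fin n))
  | 0 => (Set.univ, fun o => {j | IsTopIn R j Set.univ o})
  | r + 1 =>
      let prev := eaState R P r
      let M : Set (Fin n) := {o | ∑ k, (prev.2 o).indicator (fun k' => P k' o) k < 1}
      (M, fun o => prev.2 o ∪ {j | IsTopIn R j M o})

/-- `eaM R P r = M_{P,r+1}` (0-based round index). -/
def eaM {n : ℕ} (R : Pref n) (P : Fin n → Fin n → ℝ) (r : ℕ) : Set (Fin n) :=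
  (eaState R P r).1

/-- `eaE R P r o = E_{P,r+1}(o)` (0-based round index). -/
def eaE {n : ℕ} (R : Pref n) (P : Fin n → Fin n → ℝ) (r : ℕ) (o : Fin n) : Set (Fin n) :=
  {j | IsTopIn R j (eaM R P r) o}

/-- Ex-ante FERI (ea-FERI). -/
def EaFERI {n : ℕ} (R : Pref n) (P : Fin n → Fin n → ℝ) : Prop :=
  ∀ r : ℕ, ∀ o ∈ eaM R P r, ∀ j : Fin n, (∃ r' < r, j ∈ eaE R P r' o) →
    upperSum (R j) (P j) o = 1

/-- sd-Pareto-efficiency (sd-PE). -/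
def SdPE {n : ℕ} (R : Pref n) (P : Fin n → Fin n → ℝ) : Prop :=
  ¬ ∃ Q : Fin n → Fin n → ℝ, DoublyStochastic Q ∧ Q ≠ P ∧ ∀ j, SD (R j) (Q j) (P j)

/-- `A` is the output of the adaptive Boston mechanism with priority order `prio`
    (`prio j k` means `j` has higher priority than `k`): in every round, every item that
    receives applicants is assigned to its highest-priority applicant. -/
def ABMOutcome {n : ℕ} (prio : Fin n → Fin n → Prop) (R : Pref n)
    (A : Equiv.Perm (Fin n)) : Prop :=
  ∀ r : ℕ, ∀ o ∈ Tset R A r,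
    IsTopIn R (A.symm o) (Tunion R A r)ᶜ o ∧
      ∀ j : Fin n, A j ∉ Tunion R A r → IsTopIn R j (Tunion R A r)ᶜ o →
        j ≠ A.symm o → prio (A.symm o) j

end FeriPaper

namespace FeriPaper

private lemma exists_top {n : ℕ} (R : Pref n) (hR : IsProfile R) (j : Fin n)
    (S : Set (Fin n)) (hS : S.Nonempty) : ∃ o, IsTopIn R j S o := by
  haveI := hR j
  obtain ⟨m, hmS, hmin⟩ := (Finite.wellFounded_of_trans_of_irrefl (R j)).has_min S hS
  refine ⟨m, hmS, fun o' ho' hne => ?_⟩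
  rcases trichotomous_of (R j) m o' with h | h | h
  · exact h
  · exact absurd h.symm hne
  · exact absurd h (hmin o' ho')

private lemma top_unique {n : ℕ} (R : Pref n) (hR : IsProfile R) (j : Fin n)
    {S : Set (Fin n)} {o o' : Fin n}
    (h1 : IsTopIn R j S o) (h2 : IsTopIn R j S o') : o = o' := by
  by_contra hne
  haveI := hR j
  have ha : R j o o' := h1.2 o' h2.1 (fun h => hne h.symm)
  have hb : R j o' o := h2.2 o h1.1 hne
  exact irrefl_of (R j) o (trans_of (R j) ha hb)

/-- Rotating a cycle of items `y a, y (a+1), …, y (a+L-1)` (all distinct) on top of the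
assignment `A` yields an assignment that beats `A` in the popularity count, provided all
non-wrap steps are strict improvements for the owners, and either the wrap step also
improves or `L ≥ 3`. -/
private lemma cycle_beats {n : ℕ} (R : Pref n) (hR : IsProfile R) (A : Equiv.Perm (Fin n))
    (y : ℕ → Fin n) (a L m : ℕ) (hL : 2 ≤ L) (hwin : a + L ≤ m)
    (hinj : ∀ u v, u < v → v < m → y u ≠ y v)
    (hpref : ∀ t, t + 1 < L → R (A.symm (y (a + t))) (y (a + t + 1)) (y (a + t)))
    (hwrap : R (A.symm (y (a + (L - 1)))) (y a) (y (a + (L - 1))) ∨ 3 ≤ L) :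
    ∃ A' : Equiv.Perm (Fin n),
      {i : Fin n | R i (A i) (A' i)}.ncard < {i : Fin n | R i (A' i) (A i)}.ncard := by
  classical
  set l : List (Fin n) := (List.range L).map (fun i => y (a + i)) with hl
  have hlen : l.length = L := by simp [hl]
  have hget : ∀ u (hu : u < l.length), l[u] = y (a + u) := by
    intro u hu
    simp [hl]
  have hnodup : l.Nodup := by
    refine List.Nodup.map_on ?_ List.nodup_range
    intro u hu v hv huv
    simp only [List.mem_range] at hu hv
    by_contra hne2
    rcases Ne.lt_or_gt hne2 with h | h
    · exact hinj (a + u) (a + v) (by omega) (by omega) huv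
    · exact hinj (a + v) (a + u) (by omega) (by omega) huv.symm
  set A' : Equiv.Perm (Fin n) := A.trans l.formPerm with hA'
  have hA'app : ∀ i, A' i = l.formPerm (A i) := fun i => rfl
  have hAi : ∀ x, A (A.symm x) = x := A.apply_symm_apply
  have hπ : ∀ t, t < L → l.formPerm (y (a + t)) = y (a + (t + 1) % L) := by
    intro t ht
    have h1t : t < l.length := by rw [hlen]; exact ht
    have h2t : (t + 1) % l.length < l.length := Nat.mod_lt _ (by omega)
    have hmain := List.formPerm_apply_getElem l hnodup t h1t
    simp only [hget] at hmain
    rw [hlen] at hmain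
    exact hmain
  have hA'val : ∀ t, t < L → A' (A.symm (y (a + t))) = y (a + (t + 1) % L) := by
    intro t ht
    rw [hA'app, hAi, hπ t ht]
  have hA'not : ∀ i, A i ∉ l → A' i = A i := by
    intro i h
    rw [hA'app, List.formPerm_apply_of_notMem h]
  have himprove : ∀ t, t + 1 < L →
      R (A.symm (y (a + t))) (A' (A.symm (y (a + t)))) (y (a + t)) := by
    intro t ht
    rw [hA'val t (by omega), Nat.mod_eq_of_lt ht]
    exact hpref t ht
  have hwrapimp : R (A.symm (y (a + (L - 1)))) (y a) (y (a + (L - 1))) →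
      R (A.symm (y (a + (L - 1)))) (A' (A.symm (y (a + (L - 1))))) (y (a + (L - 1))) := by
    intro h
    rw [hA'val (L - 1) (by omega), show L - 1 + 1 = L by omega, Nat.mod_self,
      Nat.add_zero]
    exact h
  -- the two improving agents
  have himp0 : R (A.symm (y (a + 0))) (A' (A.symm (y (a + 0)))) (y (a + 0)) :=
    himprove 0 (by omega)
  have himp1 : R (A.symm (y (a + 1))) (A' (A.symm (y (a + 1)))) (y (a + 1)) := by
    rcases Nat.lt_or_ge (1 + 1) L with h | h
    · exact himprove 1 h
    · have hL2 : L = 2 := by omega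
      rcases hwrap with hw | hw
      · have h2 := hwrapimp hw
        have e : a + (L - 1) = a + 1 := by omega
        rwa [e] at h2
      · omega
  -- at most one agent can be worse off
  have hwor : {i : Fin n | R i (A i) (A' i)} ⊆ {A.symm (y (a + (L - 1)))} := by
    intro i hi
    simp only [Set.mem_setOf_eq] at hi
    by_cases hmem : A i ∈ l
    · rw [hl] at hmem
      simp only [List.mem_map, List.mem_range] at hmem
      obtain ⟨t, ht, hty⟩ := hmem
      have hi_eq : i = A.symm (y (a + t)) := by rw [hty, A.symm_apply_apply]
      by_cases htL : t + 1 < L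
      · exfalso
        have him := himprove t htL
        rw [← hi_eq, hty] at him
        haveI := hR i
        exact irrefl_of (R i) (A i) (trans_of (R i) hi him)
      · have htL' : t = L - 1 := by omega
        subst htL'
        exact Set.mem_singleton_iff.mpr hi_eq
    · rw [hA'not i hmem] at hi
      haveI := hR i
      exact absurd hi (irrefl_of (R i) (A i))
  refine ⟨A', ?_⟩
  have hne01 : A.symm (y (a + 0)) ≠ A.symm (y (a + 1)) := by
    intro h
    exact hinj (a + 0) (a + 1) (by omega) (by omega) (A.symm.injective h)
  have hsub : ({A.symm (y (a + 0)), A.symm (y (a + 1))} : Set (Fin n)) ⊆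
      {i : Fin n | R i (A' i) (A i)} := by
    intro i hi
    rcases hi with hi | hi
    · subst hi
      simp only [Set.mem_setOf_eq]
      rw [hAi]
      exact himp0
    · rcases hi with rfl
      simp only [Set.mem_setOf_eq]
      rw [hAi]
      exact himp1
  have h1 : {i : Fin n | R i (A i) (A' i)}.ncard ≤ 1 := by
    have := Set.ncard_le_ncard hwor (Set.finite_singleton _)
    simpa using this
  have h2 : 2 ≤ {i : Fin n | R i (A' i) (A i)}.ncard := by
    have := Set.ncard_le_ncard hsub (Set.toFinite _)
    rwa [Set.ncard_pair hne01] at this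
  omega

/-- Every popular deterministic assignment satisfies FERI. -/
theorem pop_implies_feri {n : ℕ} (R : Pref n) (hR : IsProfile R)
    (A : Equiv.Perm (Fin n)) (hPOP : POP R A) : FERI R A := by
  classical
  intro r o ho
  by_contra hne
  obtain ⟨j, hj, hjtop⟩ := ho
  have hCne : ((Tunion R A r)ᶜ : Set (Fin n)).Nonempty := ⟨o, hjtop.1⟩
  -- the "top remaining item of the owner" map
  choose f hf using fun x : Fin n => exists_top R hR (A.symm x) (Tunion R A r)ᶜ hCne
  -- the orbit of A j under f
  set y : ℕ → Fin n := fun t => f^[t] (A j) with hy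
  have hy0 : y 0 = A j := rfl
  have hsucc : ∀ u, y (u + 1) = f (y u) := fun u => Function.iterate_succ_apply' f u (A j)
  have hyC : ∀ t, y t ∈ (Tunion R A r)ᶜ := by
    intro t
    induction t with
    | zero => exact hj
    | succ u ih => rw [hsucc u]; exact (hf (y u)).1
  have himp : ∀ u, f (y u) ≠ y u → R (A.symm (y u)) (f (y u)) (y u) :=
    fun u h => (hf (y u)).2 (y u) (hyC u) (Ne.symm h)
  have hstep' : ∀ u, y (u + 1) ≠ y u → R (A.symm (y u)) (y (u + 1)) (y u) := by
    intro u h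
    rw [hsucc u] at h ⊢
    exact himp u h
  -- basic facts about the start of the orbit
  have hfAj : f (A j) = o := by
    have h0 := hf (A j)
    rw [A.symm_apply_apply] at h0
    exact top_unique R hR j h0 hjtop
  have h1o : y 1 = o := by rw [hsucc 0, hy0, hfAj]
  have hfo : f o ≠ o := by
    intro h
    apply hne
    have h0 := hf o
    rwa [h] at h0
  have h01 : y 0 ≠ y 1 := by
    rw [hy0, h1o]
    intro h
    exact hfo (by rw [← h, hfAj, h])
  have h12 : y 2 ≠ y 1 := by
    have e2 : y 2 = f o := by rw [show (2 : ℕ) = 1 + 1 from rfl, hsucc 1, h1o]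
    rw [e2, h1o]
    exact hfo
  -- find the first repeat in the orbit
  have hP : ∃ m : ℕ, ∃ s, s < m ∧ y s = y m := by
    obtain ⟨t1, t2, hne', heq⟩ := Finite.exists_ne_map_eq_of_infinite y
    rcases hne'.lt_or_gt with h | h
    · exact ⟨t2, t1, h, heq⟩
    · exact ⟨t1, t2, h, heq.symm⟩
  set m := Nat.find hP with hm
  obtain ⟨s, hs, hsy⟩ := Nat.find_spec hP
  rw [← hm] at hs hsy
  have hinj : ∀ u v, u < v → v < m → y u ≠ y v := by
    intro u v huv hvm h
    exact Nat.find_min hP hvm ⟨u, huv, h⟩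
  have hm2 : 2 ≤ m := by
    rcases Nat.lt_or_ge m 2 with h | h
    · exfalso
      have hm1 : m = 1 := by omega
      have hs0 : s = 0 := by omega
      rw [hs0, hm1] at hsy
      exact h01 hsy
    · exact h
  rcases Nat.lt_or_ge (s + 1) m with hcase | hcase
  · -- nontrivial cycle: rotate y s, …, y (m-1); everyone on it improves
    have hwrapA : R (A.symm (y (s + (m - s - 1)))) (y s) (y (s + (m - s - 1))) := by
      have e : s + (m - s - 1) = m - 1 := by omega
      rw [e]
      have hne' : y (m - 1 + 1) ≠ y (m - 1) := by
        rw [show m - 1 + 1 = m by omega, ← hsy]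
        exact hinj s (m - 1) (by omega) (by omega)
      have hh := hstep' (m - 1) hne'
      rwa [show m - 1 + 1 = m by omega, ← hsy] at hh
    have hA := cycle_beats R hR A y s (m - s) m (by omega) (by omega) hinj
      (fun t ht => hstep' (s + t)
        ((hinj (s + t) (s + t + 1) (by omega) (by omega)).symm))
      (Or.inl (by simpa [show m - s - 1 = (m - s) - 1 from rfl] using hwrapA))
    exact hPOP hA
  · -- the orbit ends at a fixed point; rotate the whole path y 0, …, y (m-1)
    have hsm : s + 1 = m := by omega
    have hm3 : 3 ≤ m := by
      rcases Nat.lt_or_ge m 3 with h | h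
      · exfalso
        have hmm : m = 2 := by omega
        have hss : s = 1 := by omega
        rw [hss, hmm] at hsy
        exact h12 hsy.symm
      · exact h
    have hB := cycle_beats R hR A y 0 m m (by omega) (by omega) hinj
      (fun t ht => by
        have := hstep' t ((hinj t (t + 1) (by omega) (by omega)).symm)
        simpa [Nat.zero_add] using this)
      (Or.inr hm3)
    exact hPOP hB

end FeriPaper
end
end

section
/- There exists a preference profile on an assignment problem with n = 6 agents and 6 items such that no random assignment simultaneously satisfies ex-post rank-maximality (ex-post RM) and sd-weak-envy-freeness (sd-WEF); consequently, no mechanism on this instance satisfies both properties. -/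
open Finset

noncomputable section

namespace FeriPaper

/-- Preference ranking permutations for the counterexample instance. -/
def sig6 (j : Fin 6) : Equiv.Perm (Fin 6) :=
  if j = 0 then 1 else if j = 1 then Equiv.swap 1 2 else Equiv.swap 0 j

/-- The counterexample profile. -/
def R6 : Pref 6 := fun j o o' => sig6 j o < sig6 j o'

instance (j : Fin 6) : DecidableRel (R6 j) := fun _ _ => inferInstanceAs (Decidable (_ < _))

lemma profile6 : IsProfile R6 := by
  intro j
  refine { trichotomous := ?_, irrefl := ?_, trans := ?_ }
  · intro a b
    rcases lt_trichotomy (sig6 j a) (sig6 j b) with h | h | h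
    · exact fun h1 _ => absurd h h1
    · exact fun _ _ => (sig6 j).injective h
    · exact fun _ h2 => absurd h h2
  · exact fun a => lt_irrefl _
  · exact fun a b c => lt_trans

lemma rank6_aux : ∀ j o : Fin 6,
    (univ.filter (fun o' => R6 j o' o ∨ o' = o)).card = (sig6 j o : ℕ) + 1 := by decide

lemma rank6 (j o : Fin 6) : rank R6 j o = (sig6 j o : ℕ) + 1 := by
  have h : {o' : Fin 6 | R6 j o' o ∨ o' = o}
      = ↑(univ.filter (fun o' => R6 j o' o ∨ o' = o)) := by
    ext x; simp
  rw [rank, h, Set.ncard_coe_finset, rank6_aux]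

/-- Finset version of signature classes. -/
def FS (A : Equiv.Perm (Fin 6)) (r : ℕ) : Finset (Fin 6) :=
  univ.filter (fun j => (sig6 j (A j) : ℕ) + 1 = r)

lemma sig_eq (A : Equiv.Perm (Fin 6)) (r : ℕ) :
    signature R6 A r = (FS A r).card := by
  have h : {j : Fin 6 | rank R6 j (A j) = r} = ↑(FS A r) := by
    ext j; simp [FS, rank6]
  rw [signature, h, Set.ncard_coe_finset]

lemma FS_B1 : (FS (Equiv.swap 0 1) 1).card = 5 := by decide
lemma FS_B2 : (FS (Equiv.swap 0 1) 2).card = 1 := by decide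
lemma FS_id1 : (FS 1 1).card = 5 := by decide
lemma FS_id2 : (FS 1 2).card = 0 := by decide

lemma FS_zero (A : Equiv.Perm (Fin 6)) : (FS A 0).card = 0 := by
  simp [FS, Finset.filter_eq_empty_iff]

lemma mem_FS1 (A : Equiv.Perm (Fin 6)) (j : Fin 6) :
    j ∈ FS A 1 ↔ A j = (sig6 j).symm 0 := by
  simp only [FS, Finset.mem_filter, Finset.mem_univ, true_and]
  constructor
  · intro h
    have h0 : sig6 j (A j) = 0 := by
      apply Fin.ext
      simp only [Fin.val_zero]
      omega
    exact (Equiv.apply_eq_iff_eq_symm_apply _).mp h0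
  · intro h
    have : sig6 j (A j) = 0 := (Equiv.apply_eq_iff_eq_symm_apply _).mpr h
    rw [this]
    rfl

lemma not_both (A : Equiv.Perm (Fin 6)) : ¬ (0 ∈ FS A 1 ∧ 1 ∈ FS A 1) := by
  rintro ⟨h0, h1⟩
  rw [mem_FS1] at h0 h1
  have e0 : A 0 = 0 := by rw [h0]; decide
  have e1 : A 1 = 0 := by rw [h1]; decide
  exact absurd (A.injective (e0.trans e1.symm)) (by decide)

lemma FS1_le5 (A : Equiv.Perm (Fin 6)) : (FS A 1).card ≤ 5 := by
  by_contra h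
  push_neg at h
  have hle : (FS A 1).card ≤ 6 := by
    simpa using Finset.card_le_card (Finset.subset_univ (FS A 1))
  have h6 : (FS A 1).card = Fintype.card (Fin 6) := by simp; omega
  have := Finset.eq_univ_of_card _ h6
  exact not_both A ⟨by simp [this], by simp [this]⟩

lemma classify (A : Equiv.Perm (Fin 6)) (h : (FS A 1).card = 5) :
    A = 1 ∨ A = Equiv.swap 0 1 := by
  have hcompl : (univ \ FS A 1).card = 1 := by
    rw [Finset.card_sdiff_of_subset (Finset.subset_univ _), Finset.card_univ, h]
    simp
  obtain ⟨m, hm⟩ := Finset.card_eq_one.mp hcompl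
  have hmem : ∀ j : Fin 6, j ≠ m → j ∈ FS A 1 := by
    intro j hj
    by_contra hjn
    have hjm : j ∈ univ \ FS A 1 := by simp [hjn]
    rw [hm] at hjm
    exact hj (Finset.mem_singleton.mp hjm)
  have hm01 : m = 0 ∨ m = 1 := by
    by_contra hc
    push_neg at hc
    exact not_both A ⟨hmem 0 (fun e => hc.1 e.symm), hmem 1 (fun e => hc.2 e.symm)⟩
  have top2 : (sig6 2).symm 0 = 2 := by decide
  have top3 : (sig6 3).symm 0 = 3 := by decide
  have top4 : (sig6 4).symm 0 = 4 := by decide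
  have top5 : (sig6 5).symm 0 = 5 := by decide
  have a2 : m ≠ 2 → A 2 = 2 := fun hne => ((mem_FS1 A 2).mp (hmem 2 (fun e => hne e.symm))).trans top2
  have a3 : m ≠ 3 → A 3 = 3 := fun hne => ((mem_FS1 A 3).mp (hmem 3 (fun e => hne e.symm))).trans top3
  have a4 : m ≠ 4 → A 4 = 4 := fun hne => ((mem_FS1 A 4).mp (hmem 4 (fun e => hne e.symm))).trans top4
  have a5 : m ≠ 5 → A 5 = 5 := fun hne => ((mem_FS1 A 5).mp (hmem 5 (fun e => hne e.symm))).trans top5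
  rcases hm01 with rfl | rfl
  · -- item 0 went to agent 1, so A = swap 0 1
    right
    have h1 : A 1 = 0 := by
      have := (mem_FS1 A 1).mp (hmem 1 (by decide))
      rw [this]; decide
    have h2 := a2 (by decide); have h3 := a3 (by decide)
    have h4 := a4 (by decide); have h5 := a5 (by decide)
    have h0 : A 0 = 1 := by
      have key : ∀ x : Fin 6, x ≠ 0 → x ≠ 2 → x ≠ 3 → x ≠ 4 → x ≠ 5 → x = 1 := by decide
      refine key _ ?_ ?_ ?_ ?_ ?_
      · intro e; exact absurd (A.injective (e.trans h1.symm)) (by decide)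
      · intro e; exact absurd (A.injective (e.trans h2.symm)) (by decide)
      · intro e; exact absurd (A.injective (e.trans h3.symm)) (by decide)
      · intro e; exact absurd (A.injective (e.trans h4.symm)) (by decide)
      · intro e; exact absurd (A.injective (e.trans h5.symm)) (by decide)
    ext x
    fin_cases x
    · rw [show ((⟨0, by omega⟩ : Fin 6)) = 0 from rfl, h0]; decide
    · rw [show ((⟨1, by omega⟩ : Fin 6)) = 1 from rfl, h1]; decide
    · rw [show ((⟨2, by omega⟩ : Fin 6)) = 2 from rfl, h2]; decide
    · rw [show ((⟨3, by omega⟩ : Fin 6)) = 3 from rfl, h3]; decide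
    · rw [show ((⟨4, by omega⟩ : Fin 6)) = 4 from rfl, h4]; decide
    · rw [show ((⟨5, by omega⟩ : Fin 6)) = 5 from rfl, h5]; decide
  · -- item 0 went to agent 0, so A = id
    left
    have h0 : A 0 = 0 := by
      have := (mem_FS1 A 0).mp (hmem 0 (by decide))
      rw [this]; decide
    have h2 := a2 (by decide); have h3 := a3 (by decide)
    have h4 := a4 (by decide); have h5 := a5 (by decide)
    have h1 : A 1 = 1 := by
      have key : ∀ x : Fin 6, x ≠ 0 → x ≠ 2 → x ≠ 3 → x ≠ 4 → x ≠ 5 → x = 1 := by decide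
      refine key _ ?_ ?_ ?_ ?_ ?_
      · intro e; exact absurd (A.injective (e.trans h0.symm)) (by decide)
      · intro e; exact absurd (A.injective (e.trans h2.symm)) (by decide)
      · intro e; exact absurd (A.injective (e.trans h3.symm)) (by decide)
      · intro e; exact absurd (A.injective (e.trans h4.symm)) (by decide)
      · intro e; exact absurd (A.injective (e.trans h5.symm)) (by decide)
    ext x
    fin_cases x
    · rw [show ((⟨0, by omega⟩ : Fin 6)) = 0 from rfl, h0]; rfl
    · rw [show ((⟨1, by omega⟩ : Fin 6)) = 1 from rfl, h1]; rfl
    · rw [show ((⟨2, by omega⟩ : Fin 6)) = 2 from rfl, h2]; rfl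
    · rw [show ((⟨3, by omega⟩ : Fin 6)) = 3 from rfl, h3]; rfl
    · rw [show ((⟨4, by omega⟩ : Fin 6)) = 4 from rfl, h4]; rfl
    · rw [show ((⟨5, by omega⟩ : Fin 6)) = 5 from rfl, h5]; rfl

lemma rm_unique (A : Equiv.Perm (Fin 6)) (h : RM R6 A) : A = Equiv.swap 0 1 := by
  by_contra hne
  apply h
  refine ⟨Equiv.swap 0 1, ?_⟩
  rcases lt_or_eq_of_le (FS1_le5 A) with hlt | heq
  · refine ⟨1, ?_, ?_⟩
    · rw [sig_eq, sig_eq, FS_B1]; exact hlt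
    · intro r' hr'
      interval_cases r'
      rw [sig_eq, sig_eq, FS_zero, FS_zero]
  · rcases classify A heq with rfl | rfl
    · refine ⟨2, ?_, ?_⟩
      · rw [sig_eq, sig_eq, FS_B2, FS_id2]; omega
      · intro r' hr'
        interval_cases r'
        · rw [sig_eq, sig_eq, FS_zero, FS_zero]
        · rw [sig_eq, sig_eq, FS_B1, FS_id1]
    · exact absurd rfl hne

end FeriPaper

namespace FeriPaper
/-- On some 6-agent instance, no random assignment satisfies
ex-post rank-maximality and sd-WEF simultaneously. -/
theorem no_epRM_sdWEF :
    ∃ R : Pref 6, IsProfile R ∧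
      ∀ P : Fin 6 → Fin 6 → ℝ, DoublyStochastic P →
        ¬ (ExPost (RM R) P ∧ sdWEF R P) := by
  refine ⟨R6, profile6, ?_⟩
  rintro P hDS ⟨hEP, hWEF⟩
  obtain ⟨w, hw0, hw1, hsupp, hPdef⟩ := hEP
  -- P is the permutation matrix of swap 0 1
  have hPB : ∀ j o, P j o = permMatrix (Equiv.swap 0 1) j o := by
    intro j o
    rw [hPdef]
    have hterm : ∀ A ∈ (univ : Finset (Equiv.Perm (Fin 6))),
        w A * permMatrix A j o = w A * permMatrix (Equiv.swap 0 1) j o := by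
      intro A _
      by_cases h : w A = 0
      · rw [h, zero_mul, zero_mul]
      · rw [rm_unique A (hsupp A h)]
    rw [Finset.sum_congr rfl hterm, ← Finset.sum_mul, hw1, one_mul]
  -- agent 0's allocation is item 1, agent 1's is item 0
  have hP1 : ∀ x : Fin 6, P 1 x = if x = 0 then 1 else 0 := by
    intro x
    rw [hPB]
    have : Equiv.swap (0 : Fin 6) 1 1 = 0 := by decide
    simp only [permMatrix, this]
    by_cases hx : x = 0 <;> simp [hx, eq_comm]
  -- SD (R6 0) (P 1) (P 0)
  have hSD : SD (R6 0) (P 1) (P 0) := by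
    intro o
    have h0mem : (0 : Fin 6) ∈ ucs (R6 0) o := by
      by_cases ho : o = 0
      · exact Or.inr ho.symm
      · left
        show sig6 0 0 < sig6 0 o
        have : ∀ o' : Fin 6, o' ≠ 0 → sig6 0 0 < sig6 0 o' := by decide
        exact this o ho
    have hR : upperSum (R6 0) (P 1) o = 1 := by
      rw [upperSum]
      have hpt : ∀ x : Fin 6, (ucs (R6 0) o).indicator (P 1) x
          = if x = 0 then 1 else 0 := by
        intro x
        by_cases hx : x = 0
        · subst hx
          rw [Set.indicator_of_mem h0mem, hP1]
        · by_cases hm : x ∈ ucs (R6 0) o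
          · rw [Set.indicator_of_mem hm, hP1]
          · rw [Set.indicator_of_notMem hm]
            simp [hx]
      rw [Finset.sum_congr rfl (fun x _ => hpt x)]
      simp
    have hL : upperSum (R6 0) (P 0) o ≤ 1 := by
      rw [upperSum]
      calc ∑ x, (ucs (R6 0) o).indicator (P 0) x
          ≤ ∑ x, P 0 x := by
            apply Finset.sum_le_sum
            intro x _
            exact Set.indicator_le_self' (fun y _ => hDS.1 0 y) x
        _ = 1 := hDS.2.1 0
    rw [hR]
    exact hL
  have hEq := hWEF 0 1 hSD
  have h00 : P 0 0 = 0 := by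
    rw [hPB]
    have : Equiv.swap (0 : Fin 6) 1 0 = 1 := by decide
    simp [permMatrix, this]
  have h10 : P 1 0 = 1 := by rw [hP1]; simp
  rw [hEq, h10] at h00
  norm_num at h00


end FeriPaper
end
end
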